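/- arXiv:1412.6902 — 9 statements merged into one kernel-verified Lean document; each statement's English description precedes it below -/
import Mathlib

section
/- For all X, Y ∈ W: g(X, φ̂Y) = g(φ̂X, Y) + u(X)·θ(Y) − u(Y)·θ(X). -/
theorem stmt_5 (V : Type*) [AddCommGroup V] [Module ℝ V] [FiniteDimensional ℝ V]
    (g : V →ₗ[ℝ] V →ₗ[ℝ] ℝ) (φ : V →ₗ[ℝ] V) (ξ : V) (η : V →ₗ[ℝ] ℝ) (ε : ℝ)
    (hε : ε = 1 ∨ ε = -1)
    (hgsymm : ∀ X Y : V, g X Y = g Y X)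
    (hgnd : ∀ X : V, (∀ Y : V, g X Y = 0) → X = 0)
    (hφ2 : ∀ X : V, φ (φ X) = X - η X • ξ)
    (hηξ : η ξ = 1)
    (hφξ : φ ξ = 0)
    (hηφ : ∀ X : V, η (φ X) = 0)
    (hgφ : ∀ X Y : V, g (φ X) (φ Y) = g X Y - ε * η X * η Y)
    (W : Submodule ℝ V) (hξW : ξ ∈ W)
    (hcodim : Module.finrank ℝ W + 1 = Module.finrank ℝ V)
    (E : V) (hEW : E ∈ W) (hE0 : E ≠ 0)
    (hErad : ∀ w ∈ W, g E w = 0)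
    (hEspan : ∀ v ∈ W, (∀ w ∈ W, g v w = 0) → v ∈ Submodule.span ℝ {E})
    (S : Submodule ℝ V) (hSE : S ⊔ Submodule.span ℝ {E} = W)
    (hSEdisj : S ⊓ Submodule.span ℝ {E} = ⊥)
    (hξS : ξ ∈ S)
    (hSnd : ∀ s ∈ S, (∀ t ∈ S, g s t = 0) → s = 0)
    (N : V) (hNN : g N N = 0) (hEN : g E N = 1)
    (hNS : ∀ s ∈ S, g N s = 0)
    (hWN : W ⊔ Submodule.span ℝ {N} = ⊤)
    (hWNdisj : W ⊓ Submodule.span ℝ {N} = ⊥)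
    (φhat : V → V)
    (hφhat : ∀ X ∈ W, φhat X ∈ W ∧ φ X = φhat X + (g (φ X) E) • N) :
    ∀ X ∈ W, ∀ Y ∈ W,
      g X (φhat Y) = g (φhat X) Y + g (φ X) E * g Y N - g (φ Y) E * g X N := by
  -- g(φY, ξ) = 0
  have hφYξ : ∀ Y : V, g (φ Y) ξ = 0 := by
    intro Y
    have h := hgφ (φ Y) ξ
    rw [hφξ, hηφ] at h
    simpa using h.symm
  -- g(φX, Y) = g(X, φY)
  have hsw : ∀ X Y : V, g (φ X) Y = g X (φ Y) := by
    intro X Y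
    have h := hgφ (φ X) Y
    rw [hφ2, hηφ] at h
    have h2 : g (X - η X • ξ) (φ Y) = g (φ X) Y := by simpa using h
    have h3 : g X (φ Y) - η X * g ξ (φ Y) = g (φ X) Y := by
      simpa [map_sub, LinearMap.sub_apply, smul_eq_mul] using h2
    rw [hgsymm ξ (φ Y), hφYξ] at h3
    linarith
  intro X hX Y hY
  obtain ⟨_, hX2⟩ := hφhat X hX
  obtain ⟨_, hY2⟩ := hφhat Y hY
  have e1 : g X (φ Y) = g X (φhat Y) + g (φ Y) E * g X N := by
    have h := congrArg (g X) hY2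
    simpa only [map_add, map_smul, smul_eq_mul] using h
  have e2 : g (φ X) Y = g (φhat X) Y + g (φ X) E * g N Y := by
    have h := congrArg (fun v => g v Y) hX2
    simpa only [map_add, LinearMap.add_apply, map_smul, LinearMap.smul_apply, smul_eq_mul] using h
  have := hsw X Y
  rw [e1, e2, hgsymm N Y] at this
  linarith
end

section
/- For all X, Y ∈ W: g(φ̂X, φ̂Y) = g(X, Y) − ε·η(X)·η(Y) − u(X)·θ(φ̂Y) − u(Y)·θ(φ̂X). -/
theorem stmt_6 (V : Type*) [AddCommGroup V] [Module ℝ V] [FiniteDimensional ℝ V]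
    (g : V →ₗ[ℝ] V →ₗ[ℝ] ℝ) (φ : V →ₗ[ℝ] V) (ξ : V) (η : V →ₗ[ℝ] ℝ) (ε : ℝ)
    (hε : ε = 1 ∨ ε = -1)
    (hgsymm : ∀ X Y : V, g X Y = g Y X)
    (hgnd : ∀ X : V, (∀ Y : V, g X Y = 0) → X = 0)
    (hφ2 : ∀ X : V, φ (φ X) = X - η X • ξ)
    (hηξ : η ξ = 1)
    (hφξ : φ ξ = 0)
    (hηφ : ∀ X : V, η (φ X) = 0)
    (hgφ : ∀ X Y : V, g (φ X) (φ Y) = g X Y - ε * η X * η Y)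
    (W : Submodule ℝ V) (hξW : ξ ∈ W)
    (hcodim : Module.finrank ℝ W + 1 = Module.finrank ℝ V)
    (E : V) (hEW : E ∈ W) (hE0 : E ≠ 0)
    (hErad : ∀ w ∈ W, g E w = 0)
    (hEspan : ∀ v ∈ W, (∀ w ∈ W, g v w = 0) → v ∈ Submodule.span ℝ {E})
    (S : Submodule ℝ V) (hSE : S ⊔ Submodule.span ℝ {E} = W)
    (hSEdisj : S ⊓ Submodule.span ℝ {E} = ⊥)
    (hξS : ξ ∈ S)
    (hSnd : ∀ s ∈ S, (∀ t ∈ S, g s t = 0) → s = 0)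
    (N : V) (hNN : g N N = 0) (hEN : g E N = 1)
    (hNS : ∀ s ∈ S, g N s = 0)
    (hWN : W ⊔ Submodule.span ℝ {N} = ⊤)
    (hWNdisj : W ⊓ Submodule.span ℝ {N} = ⊥)
    (φhat : V → V)
    (hφhat : ∀ X ∈ W, φhat X ∈ W ∧ φ X = φhat X + (g (φ X) E) • N) :
    ∀ X ∈ W, ∀ Y ∈ W,
      g (φhat X) (φhat Y) =
        g X Y - ε * η X * η Y - g (φ X) E * g (φhat Y) N - g (φ Y) E * g (φhat X) N := by
  intro X hX Y hY
  obtain ⟨hxW, hx⟩ := hφhat X hX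
  obtain ⟨hyW, hy⟩ := hφhat Y hY
  have h1 := hgφ X Y
  rw [hx, hy] at h1
  simp only [map_add, map_smul, LinearMap.add_apply, LinearMap.smul_apply, smul_eq_mul,
    hNN] at h1
  rw [hgsymm N (φhat Y), mul_zero, add_zero] at h1
  linarith
end

section
/- For every X ∈ W the identity φ̂(φ̂X) = X − η(X)·ξ − u(φ̂X)·N − u(X)·φN holds in V. -/
theorem stmt_8 (V : Type*) [AddCommGroup V] [Module ℝ V] [FiniteDimensional ℝ V]
    (g : V →ₗ[ℝ] V →ₗ[ℝ] ℝ) (φ : V →ₗ[ℝ] V) (ξ : V) (η : V →ₗ[ℝ] ℝ) (ε : ℝ)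
    (hε : ε = 1 ∨ ε = -1)
    (hgsymm : ∀ X Y : V, g X Y = g Y X)
    (hgnd : ∀ X : V, (∀ Y : V, g X Y = 0) → X = 0)
    (hφ2 : ∀ X : V, φ (φ X) = X - η X • ξ)
    (hηξ : η ξ = 1)
    (hφξ : φ ξ = 0)
    (hηφ : ∀ X : V, η (φ X) = 0)
    (hgφ : ∀ X Y : V, g (φ X) (φ Y) = g X Y - ε * η X * η Y)
    (W : Submodule ℝ V) (hξW : ξ ∈ W)
    (hcodim : Module.finrank ℝ W + 1 = Module.finrank ℝ V)
    (E : V) (hEW : E ∈ W) (hE0 : E ≠ 0)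
    (hErad : ∀ w ∈ W, g E w = 0)
    (hEspan : ∀ v ∈ W, (∀ w ∈ W, g v w = 0) → v ∈ Submodule.span ℝ {E})
    (S : Submodule ℝ V) (hSE : S ⊔ Submodule.span ℝ {E} = W)
    (hSEdisj : S ⊓ Submodule.span ℝ {E} = ⊥)
    (hξS : ξ ∈ S)
    (hSnd : ∀ s ∈ S, (∀ t ∈ S, g s t = 0) → s = 0)
    (N : V) (hNN : g N N = 0) (hEN : g E N = 1)
    (hNS : ∀ s ∈ S, g N s = 0)
    (hWN : W ⊔ Submodule.span ℝ {N} = ⊤)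
    (hWNdisj : W ⊓ Submodule.span ℝ {N} = ⊥)
    (φhat : V → V)
    (hφhat : ∀ X ∈ W, φhat X ∈ W ∧ φ X = φhat X + (g (φ X) E) • N) :
    ∀ X ∈ W,
      φhat (φhat X) = X - η X • ξ - (g (φ (φhat X)) E) • N - (g (φ X) E) • φ N := by
  intro X hX
  obtain ⟨hW1, h1⟩ := hφhat X hX
  obtain ⟨hW2, h2⟩ := hφhat _ hW1
  have key := hφ2 X
  rw [h1] at key
  rw [map_add, map_smul, h2] at key
  have : φhat (φhat X) + g (φ (φhat X)) E • N + g (φ X) E • φ N = X - η X • ξ := by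
    rw [← key]
  linear_combination (norm := abel_nf) this
end

section
/- Assume additionally that φE ∈ W (i.e. φE has no transversal component along N; this holds automatically when the ambient structure is (ε)-para Sasakian). Then the screen S is invariant under φ, i.e. φ(S) ⊆ S, if and only if φE ∈ span{E} and φN ∈ span{N}. -/
theorem stmt_9 (V : Type*) [AddCommGroup V] [Module ℝ V] [FiniteDimensional ℝ V]
    (g : V →ₗ[ℝ] V →ₗ[ℝ] ℝ) (φ : V →ₗ[ℝ] V) (ξ : V) (η : V →ₗ[ℝ] ℝ) (ε : ℝ)
    (hε : ε = 1 ∨ ε = -1)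
    (hgsymm : ∀ X Y : V, g X Y = g Y X)
    (hgnd : ∀ X : V, (∀ Y : V, g X Y = 0) → X = 0)
    (hφ2 : ∀ X : V, φ (φ X) = X - η X • ξ)
    (hηξ : η ξ = 1)
    (hφξ : φ ξ = 0)
    (hηφ : ∀ X : V, η (φ X) = 0)
    (hgφ : ∀ X Y : V, g (φ X) (φ Y) = g X Y - ε * η X * η Y)
    (W : Submodule ℝ V) (hξW : ξ ∈ W)
    (hcodim : Module.finrank ℝ W + 1 = Module.finrank ℝ V)
    (E : V) (hEW : E ∈ W) (hE0 : E ≠ 0)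
    (hErad : ∀ w ∈ W, g E w = 0)
    (hEspan : ∀ v ∈ W, (∀ w ∈ W, g v w = 0) → v ∈ Submodule.span ℝ {E})
    (S : Submodule ℝ V) (hSE : S ⊔ Submodule.span ℝ {E} = W)
    (hSEdisj : S ⊓ Submodule.span ℝ {E} = ⊥)
    (hξS : ξ ∈ S)
    (hSnd : ∀ s ∈ S, (∀ t ∈ S, g s t = 0) → s = 0)
    (N : V) (hNN : g N N = 0) (hEN : g E N = 1)
    (hNS : ∀ s ∈ S, g N s = 0)
    (hWN : W ⊔ Submodule.span ℝ {N} = ⊤)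
    (hWNdisj : W ⊓ Submodule.span ℝ {N} = ⊥)
    (hφEW : φ E ∈ W) :
    (∀ s ∈ S, φ s ∈ S) ↔
      (φ E ∈ Submodule.span ℝ {E} ∧ φ N ∈ Submodule.span ℝ {N}) := by
  have hSW : S ≤ W := by rw [← hSE]; exact le_sup_left
  have hεne : ε ≠ 0 := by rcases hε with h | h <;> rw [h] <;> norm_num
  have hε2 : ε * ε = 1 := by rcases hε with h | h <;> rw [h] <;> norm_num
  have hη : ∀ X, g X ξ = ε * η X := by
    intro X
    have h := hgφ X ξ
    rw [hφξ, hηξ, map_zero] at h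
    linarith
  have hηE : η E = 0 := by
    have h1 := hη E
    rw [hErad ξ hξW] at h1
    rcases mul_eq_zero.mp h1.symm with h | h
    · exact absurd h hεne
    · exact h
  have hηN : η N = 0 := by
    have h1 := hη N
    rw [hNS ξ hξS] at h1
    rcases mul_eq_zero.mp h1.symm with h | h
    · exact absurd h hεne
    · exact h
  have hφ2E : φ (φ E) = E := by rw [hφ2, hηE, zero_smul, sub_zero]
  have hφ2N : φ (φ N) = N := by rw [hφ2, hηN, zero_smul, sub_zero]
  have decompW : ∀ x ∈ W, ∃ t ∈ S, ∃ c : ℝ, x = t + c • E := by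
    intro x hx
    rw [← hSE] at hx
    obtain ⟨t, ht, z, hz, h⟩ := Submodule.mem_sup.mp hx
    obtain ⟨c, rfl⟩ := Submodule.mem_span_singleton.mp hz
    exact ⟨t, ht, c, h.symm⟩
  have decompV : ∀ x : V, ∃ t ∈ S, ∃ c d : ℝ, x = t + c • E + d • N := by
    intro x
    have hx : x ∈ W ⊔ Submodule.span ℝ {N} := by rw [hWN]; trivial
    obtain ⟨w, hw, z, hz, h⟩ := Submodule.mem_sup.mp hx
    obtain ⟨d, rfl⟩ := Submodule.mem_span_singleton.mp hz
    obtain ⟨t, ht, c, hc⟩ := decompW w hw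
    exact ⟨t, ht, c, d, by rw [← h, hc]⟩
  constructor
  · intro hinv
    -- key vanishing lemma
    have key : ∀ s ∈ S, g s ξ = 0 → (∀ t ∈ S, g s (φ t) = 0) → s = 0 := by
      intro s hs hsξ hsφ
      apply hSnd s hs
      intro t ht
      have h2 : t = φ (φ t) + η t • ξ := by rw [hφ2]; abel
      calc g s t = g s (φ (φ t) + η t • ξ) := by rw [← h2]
        _ = g s (φ (φ t)) + η t * g s ξ := by
              rw [map_add, map_smul, smul_eq_mul]
        _ = 0 := by rw [hsφ _ (hinv t ht), hsξ]; ring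
    -- φ E = a • E
    obtain ⟨s, hs, a, hsum⟩ := decompW (φ E) hφEW
    have hs0 : s = 0 := by
      apply key s hs
      · have h1 : g (φ E) ξ = 0 := by rw [hη, hηφ, mul_zero]
        rw [hsum, map_add, LinearMap.add_apply, map_smul, LinearMap.smul_apply,
          hErad ξ hξW, smul_zero, add_zero] at h1
        exact h1
      · intro t ht
        have h1 : g (φ E) (φ t) = 0 := by
          rw [hgφ, hηE, hErad t (hSW ht)]; ring
        rw [hsum, map_add, LinearMap.add_apply, map_smul, LinearMap.smul_apply,
          hErad (φ t) (hSW (hinv t ht)), smul_zero, add_zero] at h1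
        exact h1
    rw [hs0, zero_add] at hsum
    have hφE : φ E = a • E := hsum
    -- φ N = c • E + d • N
    obtain ⟨t, ht, c, d, hN⟩ := decompV (φ N)
    have ht0 : t = 0 := by
      apply key t ht
      · have h1 : g (φ N) ξ = 0 := by rw [hη, hηφ, mul_zero]
        rw [hN] at h1
        simp only [map_add, LinearMap.add_apply, map_smul, LinearMap.smul_apply,
          smul_eq_mul, hErad ξ hξW, hNS ξ hξS] at h1
        linarith
      · intro u hu
        have h1 : g (φ N) (φ u) = 0 := by
          rw [hgφ, hηN, hNS u hu]; ring
        rw [hN] at h1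
        simp only [map_add, LinearMap.add_apply, map_smul, LinearMap.smul_apply,
          smul_eq_mul, hErad (φ u) (hSW (hinv u hu)), hNS (φ u) (hinv u hu)] at h1
        linarith
    rw [ht0, zero_add] at hN
    -- g(φN, φN) = 0 gives c*d = 0
    have hgEE : g E E = 0 := hErad E hEW
    have hNE : g N E = 1 := by rw [hgsymm]; exact hEN
    have hcd : c * d = 0 := by
      have h1 : g (φ N) (φ N) = 0 := by rw [hgφ, hηN, hNN]; ring
      rw [hN] at h1
      simp only [map_add, LinearMap.add_apply, map_smul, LinearMap.smul_apply,
        smul_eq_mul, hgEE, hEN, hNE, hNN] at h1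
      nlinarith [h1]
    -- φ²N = N gives d² = 1
    have hd2 : d * d = 1 := by
      have h1 : φ (φ N) = (c * a + d * c) • E + (d * d) • N := by
        rw [hN, map_add, map_smul, map_smul, hφE, hN, smul_add, smul_smul, smul_smul,
          smul_smul]
        module
      rw [hφ2N] at h1
      have h2 := congrArg (fun x => g E x) h1
      simp only [map_add, map_smul, smul_eq_mul, hgEE, hEN] at h2
      linarith
    have hd0 : d ≠ 0 := by intro h; rw [h] at hd2; norm_num at hd2
    have hc0 : c = 0 := by
      rcases mul_eq_zero.mp hcd with h | h
      · exact h
      · exact absurd h hd0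
    refine ⟨?_, ?_⟩
    · rw [hφE]; exact Submodule.smul_mem _ _ (Submodule.mem_span_singleton_self E)
    · rw [hN, hc0, zero_smul, zero_add]
      exact Submodule.smul_mem _ _ (Submodule.mem_span_singleton_self N)
  · rintro ⟨hφE, hφN⟩ s hs
    obtain ⟨a, ha⟩ := Submodule.mem_span_singleton.mp hφE
    obtain ⟨b, hb⟩ := Submodule.mem_span_singleton.mp hφN
    have hsE : g (φ s) E = 0 := by
      have h1 : g (φ s) (φ (φ E)) = g s (φ E) - ε * η s * η (φ E) := hgφ s (φ E)
      rw [hφ2E, hηφ, ← ha, map_smul, smul_eq_mul, hgsymm s E, hErad s (hSW hs)] at h1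
      rw [h1]; ring
    have hsN : g (φ s) N = 0 := by
      have h1 : g (φ s) (φ (φ N)) = g s (φ N) - ε * η s * η (φ N) := hgφ s (φ N)
      rw [hφ2N, hηφ, ← hb, map_smul, smul_eq_mul, hgsymm s N, hNS s hs] at h1
      rw [h1]; ring
    obtain ⟨t, ht, c, d, hφs⟩ := decompV (φ s)
    have htE : g t E = 0 := by rw [hgsymm]; exact hErad t (hSW ht)
    have htN : g t N = 0 := by rw [hgsymm]; exact hNS t ht
    have hgEE : g E E = 0 := hErad E hEW
    have hNE : g N E = 1 := by rw [hgsymm]; exact hEN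
    have hd : d = 0 := by
      rw [hφs] at hsE
      simp only [map_add, LinearMap.add_apply, map_smul, LinearMap.smul_apply,
        smul_eq_mul, htE, hgEE, hNE] at hsE
      linarith
    have hc : c = 0 := by
      rw [hφs] at hsN
      simp only [map_add, LinearMap.add_apply, map_smul, LinearMap.smul_apply,
        smul_eq_mul, htN, hEN, hNN] at hsN
      linarith
    rw [hφs, hd, hc, zero_smul, zero_smul, add_zero, add_zero]
    exact ht
end

section
/- The data (φ̂, ξ, η|_W, U, u) is a para (φ, ξ, η, U, u)-structure on W: φ̂(φ̂X) = X − η(X)·ξ − u(X)·U for all X ∈ W, φ̂ξ = 0, φ̂U = 0, η(φ̂X) = 0 and u(φ̂X) = 0 for all X ∈ W, η(ξ) = 1, u(U) = 1, η(U) = 0 and u(ξ) = 0. -/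
theorem stmt_12 (V : Type*) [AddCommGroup V] [Module ℝ V] [FiniteDimensional ℝ V]
    (g : V →ₗ[ℝ] V →ₗ[ℝ] ℝ) (φ : V →ₗ[ℝ] V) (ξ : V) (η : V →ₗ[ℝ] ℝ) (ε : ℝ)
    (hε : ε = 1 ∨ ε = -1)
    (hgsymm : ∀ X Y : V, g X Y = g Y X)
    (hgnd : ∀ X : V, (∀ Y : V, g X Y = 0) → X = 0)
    (hφ2 : ∀ X : V, φ (φ X) = X - η X • ξ)
    (hηξ : η ξ = 1)
    (hφξ : φ ξ = 0)
    (hηφ : ∀ X : V, η (φ X) = 0)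
    (hgφ : ∀ X Y : V, g (φ X) (φ Y) = g X Y - ε * η X * η Y)
    (W : Submodule ℝ V) (hξW : ξ ∈ W)
    (hcodim : Module.finrank ℝ W + 1 = Module.finrank ℝ V)
    (E : V) (hEW : E ∈ W) (hE0 : E ≠ 0)
    (hErad : ∀ w ∈ W, g E w = 0)
    (hEspan : ∀ v ∈ W, (∀ w ∈ W, g v w = 0) → v ∈ Submodule.span ℝ {E})
    (S : Submodule ℝ V) (hSE : S ⊔ Submodule.span ℝ {E} = W)
    (hSEdisj : S ⊓ Submodule.span ℝ {E} = ⊥)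
    (hξS : ξ ∈ S)
    (hSnd : ∀ s ∈ S, (∀ t ∈ S, g s t = 0) → s = 0)
    (N : V) (hNN : g N N = 0) (hEN : g E N = 1)
    (hNS : ∀ s ∈ S, g N s = 0)
    (hWN : W ⊔ Submodule.span ℝ {N} = ⊤)
    (hWNdisj : W ⊓ Submodule.span ℝ {N} = ⊥)
    (φhat : V → V)
    (hφhat : ∀ X ∈ W, φhat X ∈ W ∧ φ X = φhat X + (g (φ X) E) • N)
    (hφES : φ E ∈ S) (hφNS : φ N ∈ S) :
    (∀ X ∈ W, φhat (φhat X) = X - η X • ξ - (g (φ X) E) • φ N) ∧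
    φhat ξ = 0 ∧
    φhat (φ N) = 0 ∧
    (∀ X ∈ W, η (φhat X) = 0) ∧
    (∀ X ∈ W, g (φ (φhat X)) E = 0) ∧
    η ξ = 1 ∧
    g (φ (φ N)) E = 1 ∧
    η (φ N) = 0 ∧
    g (φ ξ) E = 0 := by
  have hεne : ε ≠ 0 := by rcases hε with h | h <;> rw [h] <;> norm_num
  have hSW : S ≤ W := by rw [← hSE]; exact le_sup_left
  have hUW : φ N ∈ W := hSW hφNS
  have hηeq : ∀ X : V, ε * η X = g X ξ := by
    intro X
    have h := hgφ X ξ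
    rw [hφξ, hηξ] at h
    simp only [map_zero, mul_one] at h
    linarith
  have hηN : η N = 0 := by
    have h1 := hηeq N
    rw [hNS ξ hξS] at h1
    exact (mul_eq_zero.mp h1).resolve_left hεne
  have hgξE : g ξ E = 0 := by rw [hgsymm]; exact hErad ξ hξW
  have hgUE : g (φ N) E = 0 := by rw [hgsymm]; exact hErad _ hUW
  have hφφN : φ (φ N) = N := by rw [hφ2, hηN]; simp
  have huφN : g (φ (φ N)) E = 1 := by rw [hφφN, hgsymm]; exact hEN
  have huξ : g (φ ξ) E = 0 := by rw [hφξ]; simp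
  have hφhatξ : φhat ξ = 0 := by
    have h := (hφhat ξ hξW).2
    rw [hφξ] at h
    simp only [map_zero, LinearMap.zero_apply, zero_smul, add_zero] at h
    exact h.symm
  have hφhatU : φhat (φ N) = 0 := by
    have h := (hφhat (φ N) hUW).2
    rw [hφφN] at h
    rw [show g N E = 1 from (hgsymm N E).trans hEN] at h
    have h2 : φhat (φ N) = N - (1 : ℝ) • N := eq_sub_of_add_eq h.symm
    simpa using h2
  have key : ∀ X ∈ W, φ (φhat X) = X - η X • ξ - (g (φ X) E) • φ N := by
    intro X hX
    have h := (hφhat X hX).2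
    have h2 : φhat X = φ X - (g (φ X) E) • N := eq_sub_of_add_eq h.symm
    rw [h2, map_sub, map_smul, hφ2]
  have hu0 : ∀ X ∈ W, g (φ (φhat X)) E = 0 := by
    intro X hX
    rw [key X hX]
    simp only [map_sub, map_smul, LinearMap.sub_apply, LinearMap.smul_apply,
      smul_eq_mul, hgξE, hgUE]
    rw [hgsymm X E, hErad X hX]
    ring
  have hη0 : ∀ X ∈ W, η (φhat X) = 0 := by
    intro X hX
    have h := (hφhat X hX).2
    have h2 : φhat X = φ X - (g (φ X) E) • N := eq_sub_of_add_eq h.symm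
    rw [h2, map_sub, map_smul, hηφ, hηN, smul_eq_mul, mul_zero, sub_zero]
  refine ⟨?_, hφhatξ, hφhatU, hη0, hu0, hηξ, huφN, hηφ N, huξ⟩
  intro X hX
  have hXW := (hφhat X hX).1
  have h := (hφhat (φhat X) hXW).2
  rw [hu0 X hX, zero_smul, add_zero] at h
  rw [← h, key X hX]
end

section
/- Let D₀ := {s ∈ S : g(s, V₀) = 0, g(s, U) = 0 and g(s, ξ) = 0}. Then S = D₀ ⊕ span{V₀, U} ⊕ span{ξ} as a direct sum, with D₀ g-orthogonal to span{V₀, U} and to ξ, and span{V₀, U} g-orthogonal to ξ; moreover the restriction of g to D₀ is nondegenerate and dim D₀ = dim V − 5. -/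
theorem stmt_13 (V : Type*) [AddCommGroup V] [Module ℝ V] [FiniteDimensional ℝ V]
    (g : V →ₗ[ℝ] V →ₗ[ℝ] ℝ) (φ : V →ₗ[ℝ] V) (ξ : V) (η : V →ₗ[ℝ] ℝ) (ε : ℝ)
    (hε : ε = 1 ∨ ε = -1)
    (hgsymm : ∀ X Y : V, g X Y = g Y X)
    (hgnd : ∀ X : V, (∀ Y : V, g X Y = 0) → X = 0)
    (hφ2 : ∀ X : V, φ (φ X) = X - η X • ξ)
    (hηξ : η ξ = 1)
    (hφξ : φ ξ = 0)
    (hηφ : ∀ X : V, η (φ X) = 0)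
    (hgφ : ∀ X Y : V, g (φ X) (φ Y) = g X Y - ε * η X * η Y)
    (W : Submodule ℝ V) (hξW : ξ ∈ W)
    (hcodim : Module.finrank ℝ W + 1 = Module.finrank ℝ V)
    (E : V) (hEW : E ∈ W) (hE0 : E ≠ 0)
    (hErad : ∀ w ∈ W, g E w = 0)
    (hEspan : ∀ v ∈ W, (∀ w ∈ W, g v w = 0) → v ∈ Submodule.span ℝ {E})
    (S : Submodule ℝ V) (hSE : S ⊔ Submodule.span ℝ {E} = W)
    (hSEdisj : S ⊓ Submodule.span ℝ {E} = ⊥)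
    (hξS : ξ ∈ S)
    (hSnd : ∀ s ∈ S, (∀ t ∈ S, g s t = 0) → s = 0)
    (N : V) (hNN : g N N = 0) (hEN : g E N = 1)
    (hNS : ∀ s ∈ S, g N s = 0)
    (hWN : W ⊔ Submodule.span ℝ {N} = ⊤)
    (hWNdisj : W ⊓ Submodule.span ℝ {N} = ⊥)
    (hφES : φ E ∈ S) (hφNS : φ N ∈ S)
    (D₀ : Submodule ℝ V)
    (hD₀ : ∀ s : V, s ∈ D₀ ↔ s ∈ S ∧ g s (φ E) = 0 ∧ g s (φ N) = 0 ∧ g s ξ = 0) :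
    S = D₀ ⊔ Submodule.span ℝ {φ E, φ N} ⊔ Submodule.span ℝ {ξ} ∧
    Disjoint D₀ (Submodule.span ℝ {φ E, φ N} ⊔ Submodule.span ℝ {ξ}) ∧
    Disjoint (Submodule.span ℝ {φ E, φ N}) (Submodule.span ℝ {ξ}) ∧
    (∀ d ∈ D₀, ∀ w ∈ Submodule.span ℝ {φ E, φ N}, g d w = 0) ∧
    (∀ d ∈ D₀, g d ξ = 0) ∧
    (∀ w ∈ Submodule.span ℝ {φ E, φ N}, g w ξ = 0) ∧
    (∀ d ∈ D₀, (∀ d' ∈ D₀, g d d' = 0) → d = 0) ∧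
    Module.finrank ℝ D₀ = Module.finrank ℝ V - 5 := by
  have hεne : ε ≠ 0 := by rcases hε with h | h <;> norm_num [h]
  have hε2 : ε * ε = 1 := by rcases hε with h | h <;> norm_num [h]
  -- g X ξ = ε * η X
  have hgξ : ∀ X : V, g X ξ = ε * η X := by
    intro X
    have h := hgφ X ξ
    rw [hφξ] at h
    simp [hηξ] at h
    linarith
  have hηE : η E = 0 := by
    have h1 := hgξ E
    rw [hErad ξ hξW] at h1
    rcases mul_eq_zero.mp h1.symm with h | h
    · exact absurd h hεne
    · exact h
  have hηN : η N = 0 := by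
    have h1 := hgξ N
    rw [hNS ξ hξS] at h1
    rcases mul_eq_zero.mp h1.symm with h | h
    · exact absurd h hεne
    · exact h
  -- Gram matrix entries
  have gVU : g (φ E) (φ N) = 1 := by
    rw [hgφ, hEN, hηE]; ring
  have gUV : g (φ N) (φ E) = 1 := by rw [hgsymm, gVU]
  have gVV : g (φ E) (φ E) = 0 := by
    rw [hgφ, hErad E hEW, hηE]; ring
  have gUU : g (φ N) (φ N) = 0 := by
    rw [hgφ, hNN, hηN]; ring
  have gVξ : g (φ E) ξ = 0 := by rw [hgξ, hηφ]; ring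
  have gξV : g ξ (φ E) = 0 := by rw [hgsymm, gVξ]
  have gUξ : g (φ N) ξ = 0 := by rw [hgξ, hηφ]; ring
  have gξU : g ξ (φ N) = 0 := by rw [hgsymm, gUξ]
  have gξξ : g ξ ξ = ε := by rw [hgξ, hηξ]; ring
  -- nonvanishing
  have hV0ne : φ E ≠ 0 := by
    intro h; rw [h] at gVU; simp at gVU
  have hUne : φ N ≠ 0 := by
    intro h; rw [h] at gVU; simp at gVU
  have hξne : ξ ≠ 0 := by
    intro h; rw [h] at hηξ; simp at hηξ
  -- the span of the pair and ξ
  set P : Submodule ℝ V := Submodule.span ℝ {φ E, φ N} with hP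
  have hVmem : φ E ∈ P := Submodule.subset_span (by simp)
  have hUmem : φ N ∈ P := Submodule.subset_span (by simp)
  have hPS : P ≤ S := by
    rw [hP, Submodule.span_le]
    rintro x (rfl | rfl)
    · exact hφES
    · exact hφNS
  have hξspanS : Submodule.span ℝ {ξ} ≤ S := by
    rw [Submodule.span_le]; rintro x rfl; exact hξS
  have hD₀S : D₀ ≤ S := fun x hx => ((hD₀ x).mp hx).1
  -- orthogonality of P and ξ
  have hPξ : ∀ w ∈ P, g w ξ = 0 := by
    intro w hw
    obtain ⟨a, b, rfl⟩ := Submodule.mem_span_pair.mp hw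
    simp [map_add, map_smul, gVξ, gUξ]
  -- orthogonality of D₀ with P
  have hD₀P : ∀ d ∈ D₀, ∀ w ∈ P, g d w = 0 := by
    intro d hd w hw
    obtain ⟨hdS, h1, h2, h3⟩ := (hD₀ d).mp hd
    obtain ⟨a, b, rfl⟩ := Submodule.mem_span_pair.mp hw
    simp [h1, h2]
  have hD₀ξ : ∀ d ∈ D₀, g d ξ = 0 := fun d hd => ((hD₀ d).mp hd).2.2.2
  -- decomposition of elements of S
  have hdecomp : ∀ s ∈ S, s - (g s (φ N)) • (φ E) - (g s (φ E)) • (φ N)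
      - (ε * g s ξ) • ξ ∈ D₀ := by
    intro s hs
    rw [hD₀]
    refine ⟨?_, ?_, ?_, ?_⟩
    · exact Submodule.sub_mem _ (Submodule.sub_mem _ (Submodule.sub_mem _ hs
        (Submodule.smul_mem _ _ hφES)) (Submodule.smul_mem _ _ hφNS))
        (Submodule.smul_mem _ _ hξS)
    · simp [map_sub, map_smul, gVV, gUV, gξV]
    · simp [map_sub, map_smul, gVU, gUU, gξU]
    · simp only [map_sub, map_smul, LinearMap.sub_apply, LinearMap.smul_apply,
        smul_eq_mul, gVξ, gUξ, gξξ]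
      rcases hε with h | h <;> rw [h] <;> ring
  -- S = D₀ ⊔ P ⊔ span ξ
  have hSeq : S = D₀ ⊔ P ⊔ Submodule.span ℝ {ξ} := by
    apply le_antisymm
    · intro s hs
      have hd := hdecomp s hs
      have : s = (s - (g s (φ N)) • (φ E) - (g s (φ E)) • (φ N) - (ε * g s ξ) • ξ)
          + ((g s (φ N)) • (φ E) + (g s (φ E)) • (φ N)) + (ε * g s ξ) • ξ := by abel
      rw [this]
      refine Submodule.add_mem _ (Submodule.add_mem _ ?_ ?_) ?_
      · exact Submodule.mem_sup_left (Submodule.mem_sup_left hd)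
      · exact Submodule.mem_sup_left (Submodule.mem_sup_right
          (Submodule.add_mem _ (Submodule.smul_mem _ _ hVmem) (Submodule.smul_mem _ _ hUmem)))
      · exact Submodule.mem_sup_right (Submodule.smul_mem _ _
          (Submodule.mem_span_singleton_self ξ))
    · exact sup_le (sup_le hD₀S hPS) hξspanS
  -- disjointness of D₀ and P ⊔ span ξ
  have hdisj1 : Disjoint D₀ (P ⊔ Submodule.span ℝ {ξ}) := by
    rw [Submodule.disjoint_def]
    intro x hxD hxP
    obtain ⟨y, hy, z, hz, rfl⟩ := Submodule.mem_sup.mp hxP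
    obtain ⟨a, b, rfl⟩ := Submodule.mem_span_pair.mp hy
    obtain ⟨c, rfl⟩ := Submodule.mem_span_singleton.mp hz
    obtain ⟨hxS, h1, h2, h3⟩ := (hD₀ _).mp hxD
    simp only [map_add, map_smul, LinearMap.add_apply, LinearMap.smul_apply, smul_eq_mul,
      gVU, gUU, gξU, gVV, gUV, gξV, gVξ, gUξ, gξξ] at h1 h2 h3
    have ha : a = 0 := by linarith
    have hb : b = 0 := by linarith
    have hc : c = 0 := by
      rcases mul_eq_zero.mp (by linarith : c * ε = 0) with h | h
      · exact h
      · exact absurd h hεne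
    simp [ha, hb, hc]
  -- disjointness of P and span ξ
  have hdisj2 : Disjoint P (Submodule.span ℝ {ξ}) := by
    rw [Submodule.disjoint_def]
    intro x hxP hxξ
    obtain ⟨c, rfl⟩ := Submodule.mem_span_singleton.mp hxξ
    have h1 := hPξ _ hxP
    simp only [map_smul, LinearMap.smul_apply, smul_eq_mul, gξξ] at h1
    have hc : c = 0 := by
      rcases mul_eq_zero.mp h1 with h | h
      · exact h
      · exact absurd h hεne
    simp [hc]
  -- nondegeneracy on D₀
  have hnd : ∀ d ∈ D₀, (∀ d' ∈ D₀, g d d' = 0) → d = 0 := by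
    intro d hd h
    apply hSnd d (hD₀S hd)
    intro t ht
    have hdt := hdecomp t ht
    have h1 := h _ hdt
    obtain ⟨hdS, hd1, hd2, hd3⟩ := (hD₀ d).mp hd
    simp only [map_sub, map_smul, LinearMap.sub_apply, LinearMap.smul_apply, smul_eq_mul,
      hd1, hd2, hd3] at h1
    linarith
  -- dimensions
  have hrk2 : Module.finrank ℝ P = 2 := by
    have hsp : ({φ E, φ N} : Set V) = insert (φ E) {φ N} := rfl
    have : P = Submodule.span ℝ {φ E} ⊔ Submodule.span ℝ {φ N} := by
      rw [hP, hsp, Submodule.span_insert]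
    rw [this]
    have hdisj : Disjoint (Submodule.span ℝ {φ E} : Submodule ℝ V) (Submodule.span ℝ {φ N}) := by
      rw [Submodule.disjoint_def]
      intro x hx1 hx2
      obtain ⟨a, rfl⟩ := Submodule.mem_span_singleton.mp hx1
      obtain ⟨b, hb⟩ := Submodule.mem_span_singleton.mp hx2
      have : g (a • φ E) (φ N) = a := by simp [map_smul, gVU]
      rw [← hb] at this
      simp only [map_smul, LinearMap.smul_apply, smul_eq_mul, gUU, mul_zero] at this
      rw [← this]
      simp
    have := Submodule.finrank_sup_add_finrank_inf_eq (Submodule.span ℝ {φ E}) (Submodule.span ℝ {φ N})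
    rw [hdisj.eq_bot] at this
    simp [finrank_span_singleton hV0ne, finrank_span_singleton hUne] at this
    omega
  have hrk3 : Module.finrank ℝ (P ⊔ Submodule.span ℝ {ξ} : Submodule ℝ V) = 3 := by
    have := Submodule.finrank_sup_add_finrank_inf_eq P (Submodule.span ℝ {ξ})
    rw [hdisj2.eq_bot] at this
    simp [hrk2, finrank_span_singleton hξne] at this
    omega
  have hrkS : Module.finrank ℝ S = Module.finrank ℝ D₀ + 3 := by
    have h1 := Submodule.finrank_sup_add_finrank_inf_eq D₀ (P ⊔ Submodule.span ℝ {ξ})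
    rw [hdisj1.eq_bot] at h1
    have h2 : D₀ ⊔ (P ⊔ Submodule.span ℝ {ξ}) = S := by
      rw [hSeq]; simp [sup_assoc]
    rw [h2, hrk3] at h1
    simpa using h1
  have hrkW : Module.finrank ℝ W = Module.finrank ℝ S + 1 := by
    have h1 := Submodule.finrank_sup_add_finrank_inf_eq S (Submodule.span ℝ {E})
    rw [hSEdisj, hSE] at h1
    simp [finrank_span_singleton hE0] at h1
    omega
  refine ⟨by rw [hSeq, sup_assoc], hdisj1, hdisj2, hD₀P, hD₀ξ, hPξ, hnd, ?_⟩
  omega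
end

section
/- Let D₀ := {s ∈ S : g(s, V₀) = 0, g(s, U) = 0 and g(s, ξ) = 0}. Then D₀ is invariant under φ, in fact φ(D₀) = D₀; moreover u(X) := g(φX, E) vanishes for every X ∈ D₀, so the tangential part φ̂ of φ coincides with φ on D₀. -/
theorem stmt_14 (V : Type*) [AddCommGroup V] [Module ℝ V] [FiniteDimensional ℝ V]
    (g : V →ₗ[ℝ] V →ₗ[ℝ] ℝ) (φ : V →ₗ[ℝ] V) (ξ : V) (η : V →ₗ[ℝ] ℝ) (ε : ℝ)
    (hε : ε = 1 ∨ ε = -1)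
    (hgsymm : ∀ X Y : V, g X Y = g Y X)
    (hgnd : ∀ X : V, (∀ Y : V, g X Y = 0) → X = 0)
    (hφ2 : ∀ X : V, φ (φ X) = X - η X • ξ)
    (hηξ : η ξ = 1)
    (hφξ : φ ξ = 0)
    (hηφ : ∀ X : V, η (φ X) = 0)
    (hgφ : ∀ X Y : V, g (φ X) (φ Y) = g X Y - ε * η X * η Y)
    (W : Submodule ℝ V) (hξW : ξ ∈ W)
    (hcodim : Module.finrank ℝ W + 1 = Module.finrank ℝ V)
    (E : V) (hEW : E ∈ W) (hE0 : E ≠ 0)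
    (hErad : ∀ w ∈ W, g E w = 0)
    (hEspan : ∀ v ∈ W, (∀ w ∈ W, g v w = 0) → v ∈ Submodule.span ℝ {E})
    (S : Submodule ℝ V) (hSE : S ⊔ Submodule.span ℝ {E} = W)
    (hSEdisj : S ⊓ Submodule.span ℝ {E} = ⊥)
    (hξS : ξ ∈ S)
    (hSnd : ∀ s ∈ S, (∀ t ∈ S, g s t = 0) → s = 0)
    (N : V) (hNN : g N N = 0) (hEN : g E N = 1)
    (hNS : ∀ s ∈ S, g N s = 0)
    (hWN : W ⊔ Submodule.span ℝ {N} = ⊤)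
    (hWNdisj : W ⊓ Submodule.span ℝ {N} = ⊥)
    (φhat : V → V)
    (hφhat : ∀ X ∈ W, φhat X ∈ W ∧ φ X = φhat X + (g (φ X) E) • N)
    (hφES : φ E ∈ S) (hφNS : φ N ∈ S)
    (D₀ : Submodule ℝ V)
    (hD₀ : ∀ s : V, s ∈ D₀ ↔ s ∈ S ∧ g s (φ E) = 0 ∧ g s (φ N) = 0 ∧ g s ξ = 0) :
    Submodule.map φ D₀ = D₀ ∧
    (∀ X ∈ D₀, g (φ X) E = 0) ∧
    (∀ X ∈ D₀, φhat X = φ X) := by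

  have hεne : ε ≠ 0 := by rcases hε with h | h <;> simp [h]
  have hgξ : ∀ Y : V, g Y ξ = ε * η Y := by
    intro Y
    have h := hgφ Y ξ
    rw [hφξ, hηξ] at h
    simp at h
    linarith
  have hηE : η E = 0 := by
    have h := hgξ E
    rw [hErad ξ hξW] at h
    exact (mul_eq_zero.mp h.symm).resolve_left hεne
  have hSW : S ≤ W := by
    rw [← hSE]; exact le_sup_left
  -- facts for X ∈ D₀
  have hkey : ∀ X ∈ D₀, φ X ∈ D₀ ∧ g (φ X) E = 0 := by
    intro X hX
    obtain ⟨hXS, h1, h2, h3⟩ := (hD₀ X).mp hX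
    have hηX : η X = 0 := by
      have h := hgξ X
      rw [h3] at h
      exact (mul_eq_zero.mp h.symm).resolve_left hεne
    have hgφXξ : g (φ X) ξ = 0 := by rw [hgξ, hηφ, mul_zero]
    have hgφXE : g (φ X) E = 0 := by
      have h := hgφ X (φ E)
      rw [hφ2 E] at h
      simp [hηX, h1, hηE] at h
      exact h
    have hgφXN : g (φ X) N = 0 := by
      have h := hgφ X (φ N)
      rw [hφ2 N] at h
      simp [hηX, h2, hgφXξ] at h
      exact h
    have hφXW : φ X ∈ W := by
      have hmem : φ X ∈ W ⊔ Submodule.span ℝ {N} := by rw [hWN]; exact Submodule.mem_top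
      obtain ⟨w, hw, z, hz, heq⟩ := Submodule.mem_sup.mp hmem
      obtain ⟨c, rfl⟩ := Submodule.mem_span_singleton.mp hz
      have hc : c = 0 := by
        have := hgφXE
        rw [← heq] at this
        have hwE : g w E = 0 := by rw [hgsymm]; exact hErad w hw
        have hNE : g N E = 1 := by rw [hgsymm]; exact hEN
        simp [hwE, hNE] at this
        exact this
      rw [← heq, hc]; simpa using hw
    have hφXS : φ X ∈ S := by
      have hmem : φ X ∈ S ⊔ Submodule.span ℝ {E} := by rw [hSE]; exact hφXW
      obtain ⟨s, hs, z, hz, heq⟩ := Submodule.mem_sup.mp hmem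
      obtain ⟨c, rfl⟩ := Submodule.mem_span_singleton.mp hz
      have hc : c = 0 := by
        have := hgφXN
        rw [← heq] at this
        have hsN : g s N = 0 := by rw [hgsymm]; exact hNS s hs
        simp [hsN, hEN] at this
        exact this
      rw [← heq, hc]; simpa using hs
    refine ⟨(hD₀ (φ X)).mpr ⟨hφXS, ?_, ?_, hgφXξ⟩, hgφXE⟩
    · have h := hgφ X E
      rw [hηX] at h
      simp at h
      rw [h, hgsymm]
      exact hErad X (hSW hXS)
    · have h := hgφ X N
      rw [hηX] at h
      simp at h
      rw [h, hgsymm]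
      exact hNS X hXS
  refine ⟨?_, fun X hX => (hkey X hX).2, ?_⟩
  · apply le_antisymm
    · rintro _ ⟨X, hX, rfl⟩
      exact (hkey X hX).1
    · intro X hX
      obtain ⟨hXS, h1, h2, h3⟩ := (hD₀ X).mp hX
      have hηX : η X = 0 := by
        have h := hgξ X
        rw [h3] at h
        exact (mul_eq_zero.mp h.symm).resolve_left hεne
      refine ⟨φ X, (hkey X hX).1, ?_⟩
      rw [hφ2 X, hηX, zero_smul, sub_zero]
  · intro X hX
    obtain ⟨hXS, _, _, _⟩ := (hD₀ X).mp hX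
    have h := (hφhat X (hSW hXS)).2
    rw [(hkey X hX).2, zero_smul, add_zero] at h
    exact h.symm
end

section
/- W decomposes as the direct sum W = D ⊕ D′ ⊕ span{ξ}, where D := D₀ ⊕ span{E} ⊕ span{V₀}, D′ := span{U}, and D₀ := {s ∈ S : g(s, V₀) = 0, g(s, U) = 0 and g(s, ξ) = 0}; moreover ξ is g-orthogonal to both D and D′. -/
set_option maxHeartbeats 1000000 in
theorem stmt_15 (V : Type*) [AddCommGroup V] [Module ℝ V] [FiniteDimensional ℝ V]
    (g : V →ₗ[ℝ] V →ₗ[ℝ] ℝ) (φ : V →ₗ[ℝ] V) (ξ : V) (η : V →ₗ[ℝ] ℝ) (ε : ℝ)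
    (hε : ε = 1 ∨ ε = -1)
    (hgsymm : ∀ X Y : V, g X Y = g Y X)
    (hgnd : ∀ X : V, (∀ Y : V, g X Y = 0) → X = 0)
    (hφ2 : ∀ X : V, φ (φ X) = X - η X • ξ)
    (hηξ : η ξ = 1)
    (hφξ : φ ξ = 0)
    (hηφ : ∀ X : V, η (φ X) = 0)
    (hgφ : ∀ X Y : V, g (φ X) (φ Y) = g X Y - ε * η X * η Y)
    (W : Submodule ℝ V) (hξW : ξ ∈ W)
    (hcodim : Module.finrank ℝ W + 1 = Module.finrank ℝ V)
    (E : V) (hEW : E ∈ W) (hE0 : E ≠ 0)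
    (hErad : ∀ w ∈ W, g E w = 0)
    (hEspan : ∀ v ∈ W, (∀ w ∈ W, g v w = 0) → v ∈ Submodule.span ℝ {E})
    (S : Submodule ℝ V) (hSE : S ⊔ Submodule.span ℝ {E} = W)
    (hSEdisj : S ⊓ Submodule.span ℝ {E} = ⊥)
    (hξS : ξ ∈ S)
    (hSnd : ∀ s ∈ S, (∀ t ∈ S, g s t = 0) → s = 0)
    (N : V) (hNN : g N N = 0) (hEN : g E N = 1)
    (hNS : ∀ s ∈ S, g N s = 0)
    (hWN : W ⊔ Submodule.span ℝ {N} = ⊤)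
    (hWNdisj : W ⊓ Submodule.span ℝ {N} = ⊥)
    (hφES : φ E ∈ S) (hφNS : φ N ∈ S)
    (D₀ : Submodule ℝ V)
    (hD₀ : ∀ s : V, s ∈ D₀ ↔ s ∈ S ∧ g s (φ E) = 0 ∧ g s (φ N) = 0 ∧ g s ξ = 0) :
    W = (D₀ ⊔ Submodule.span ℝ {E} ⊔ Submodule.span ℝ {φ E}) ⊔
        Submodule.span ℝ {φ N} ⊔ Submodule.span ℝ {ξ} ∧
    Disjoint (D₀ ⊔ Submodule.span ℝ {E} ⊔ Submodule.span ℝ {φ E})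
      (Submodule.span ℝ {φ N} ⊔ Submodule.span ℝ {ξ}) ∧
    Disjoint (Submodule.span ℝ {φ N}) (Submodule.span ℝ {ξ}) ∧
    (∀ d ∈ D₀ ⊔ Submodule.span ℝ {E} ⊔ Submodule.span ℝ {φ E}, g d ξ = 0) ∧
    (∀ d ∈ Submodule.span ℝ {φ N}, g d ξ = 0) := by
  have hε0 : ε ≠ 0 := by rcases hε with h | h <;> simp [h]
  have hgXξ : ∀ X : V, g X ξ = ε * η X := by
    intro X
    have h := hgφ X ξ
    rw [hφξ, hηξ, map_zero] at h
    linarith [h]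
  have hSW : S ≤ W := hSE ▸ le_sup_left
  have hηE : η E = 0 := by
    have h1 := hErad ξ hξW
    have h2 := hgXξ E
    rw [h1] at h2
    exact (mul_eq_zero.1 h2.symm).resolve_left hε0
  have hηN : η N = 0 := by
    have h1 := hNS ξ hξS
    have h2 := hgXξ N
    rw [h1] at h2
    exact (mul_eq_zero.1 h2.symm).resolve_left hε0
  have hgEE : g E E = 0 := hErad E hEW
  have hgEφE : g E (φ E) = 0 := hErad _ (hSW hφES)
  have hgEφN : g E (φ N) = 0 := hErad _ (hSW hφNS)
  have hgEξ : g E ξ = 0 := hErad ξ hξW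
  have hgφEφE : g (φ E) (φ E) = 0 := by rw [hgφ, hηE, hgEE]; ring
  have hgφEφN : g (φ E) (φ N) = 1 := by rw [hgφ, hηE, hEN]; ring
  have hgφNφN : g (φ N) (φ N) = 0 := by rw [hgφ, hηN, hNN]; ring
  have hgφEξ : g (φ E) ξ = 0 := by rw [hgXξ, hηφ]; ring
  have hgφNξ : g (φ N) ξ = 0 := by rw [hgXξ, hηφ]; ring
  have hgξξ : g ξ ξ = ε := by rw [hgXξ, hηξ]; ring
  have hgξφE : g ξ (φ E) = 0 := by rw [hgsymm]; exact hgφEξ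
  have hgξφN : g ξ (φ N) = 0 := by rw [hgsymm]; exact hgφNξ
  have hgφNφE : g (φ N) (φ E) = 1 := by rw [hgsymm]; exact hgφEφN
  have hgφEE : g (φ E) E = 0 := by rw [hgsymm]; exact hgEφE
  have hgφNE : g (φ N) E = 0 := by rw [hgsymm]; exact hgEφN
  have hηD₀ : ∀ s ∈ D₀, η s = 0 := by
    intro s hs
    obtain ⟨-, -, -, h⟩ := (hD₀ s).1 hs
    have h2 := hgXξ s
    rw [h] at h2
    exact (mul_eq_zero.1 h2.symm).resolve_left hε0
  have hDdec : ∀ d ∈ D₀ ⊔ Submodule.span ℝ {E} ⊔ Submodule.span ℝ {φ E},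
      ∃ (s : V) (a b : ℝ), s ∈ D₀ ∧ d = s + a • E + b • φ E := by
    intro d hd
    rcases Submodule.mem_sup.1 hd with ⟨x, hx, y, hy, rfl⟩
    rcases Submodule.mem_sup.1 hx with ⟨s, hs, e, he, rfl⟩
    rcases Submodule.mem_span_singleton.1 he with ⟨a, rfl⟩
    rcases Submodule.mem_span_singleton.1 hy with ⟨b, rfl⟩
    exact ⟨s, a, b, hs, rfl⟩
  refine ⟨?_, ?_, ?_, ?_, ?_⟩
  · -- W = big sup
    apply le_antisymm
    · -- W ≤ RHS
      intro w hw
      rw [← hSE] at hw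
      rcases Submodule.mem_sup.1 hw with ⟨sw, hsw, e, he, rfl⟩
      rcases Submodule.mem_span_singleton.1 he with ⟨lam, rfl⟩
      set β := g (sw + lam • E) (φ N) with hβ
      set γ := g (sw + lam • E) (φ E) with hγ
      set δ := η (sw + lam • E) with hδ
      have hβ' : β = g sw (φ N) := by
        simp only [hβ, map_add, map_smul, LinearMap.add_apply, LinearMap.smul_apply,
          smul_eq_mul, hgEφN]; ring
      have hγ' : γ = g sw (φ E) := by
        simp only [hγ, map_add, map_smul, LinearMap.add_apply, LinearMap.smul_apply,
          smul_eq_mul, hgEφE]; ring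
      have hδ' : δ = η sw := by
        simp only [hδ, map_add, map_smul, smul_eq_mul, hηE]; ring
      set s₀ : V := sw - β • φ E - γ • φ N - δ • ξ with hs₀def
      have hs₀ : s₀ ∈ D₀ := by
        rw [hD₀]
        refine ⟨?_, ?_, ?_, ?_⟩
        · exact sub_mem (sub_mem (sub_mem hsw (S.smul_mem _ hφES)) (S.smul_mem _ hφNS))
            (S.smul_mem _ hξS)
        · simp only [hs₀def, map_sub, map_smul, LinearMap.sub_apply, LinearMap.smul_apply,
            smul_eq_mul, hgφEφE, hgφNφE, hgξφE, hγ']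
          ring
        · simp only [hs₀def, map_sub, map_smul, LinearMap.sub_apply, LinearMap.smul_apply,
            smul_eq_mul, hgφEφN, hgφNφN, hgξφN, hβ']
          ring
        · simp only [hs₀def, map_sub, map_smul, LinearMap.sub_apply, LinearMap.smul_apply,
            smul_eq_mul, hgφEξ, hgφNξ, hgξξ, hδ', hgXξ sw]
          ring
      have heq : sw + lam • E = s₀ + lam • E + β • φ E + γ • φ N + δ • ξ := by
        rw [hs₀def]; abel
      rw [heq]
      have hD₀le : D₀ ≤ (D₀ ⊔ Submodule.span ℝ {E} ⊔ Submodule.span ℝ {φ E}) ⊔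
          Submodule.span ℝ {φ N} ⊔ Submodule.span ℝ {ξ} :=
        fun x hx => Submodule.mem_sup_left (Submodule.mem_sup_left
          (Submodule.mem_sup_left (Submodule.mem_sup_left hx)))
      have hEle : Submodule.span ℝ {E} ≤ (D₀ ⊔ Submodule.span ℝ {E} ⊔ Submodule.span ℝ {φ E}) ⊔
          Submodule.span ℝ {φ N} ⊔ Submodule.span ℝ {ξ} :=
        fun x hx => Submodule.mem_sup_left (Submodule.mem_sup_left
          (Submodule.mem_sup_left (Submodule.mem_sup_right hx)))
      have hφEle : Submodule.span ℝ {φ E} ≤ (D₀ ⊔ Submodule.span ℝ {E} ⊔ Submodule.span ℝ {φ E}) ⊔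
          Submodule.span ℝ {φ N} ⊔ Submodule.span ℝ {ξ} :=
        fun x hx => Submodule.mem_sup_left (Submodule.mem_sup_left (Submodule.mem_sup_right hx))
      have hφNle : Submodule.span ℝ {φ N} ≤ (D₀ ⊔ Submodule.span ℝ {E} ⊔ Submodule.span ℝ {φ E}) ⊔
          Submodule.span ℝ {φ N} ⊔ Submodule.span ℝ {ξ} :=
        fun x hx => Submodule.mem_sup_left (Submodule.mem_sup_right hx)
      have hξle : Submodule.span ℝ {ξ} ≤ (D₀ ⊔ Submodule.span ℝ {E} ⊔ Submodule.span ℝ {φ E}) ⊔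
          Submodule.span ℝ {φ N} ⊔ Submodule.span ℝ {ξ} := fun x hx => Submodule.mem_sup_right hx
      exact add_mem (add_mem (add_mem (add_mem (hD₀le hs₀)
        (hEle (Submodule.smul_mem _ _ (Submodule.mem_span_singleton_self E))))
        (hφEle (Submodule.smul_mem _ _ (Submodule.mem_span_singleton_self (φ E)))))
        (hφNle (Submodule.smul_mem _ _ (Submodule.mem_span_singleton_self (φ N)))))
        (hξle (Submodule.smul_mem _ _ (Submodule.mem_span_singleton_self ξ)))
    · -- RHS ≤ W
      have hD₀W : D₀ ≤ W := fun x hx => hSW ((hD₀ x).1 hx).1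
      refine sup_le (sup_le (sup_le (sup_le hD₀W ?_) ?_) ?_) ?_ <;>
        rw [Submodule.span_le, Set.singleton_subset_iff]
      · exact hEW
      · exact hSW hφES
      · exact hSW hφNS
      · exact hξW
  · -- Disjoint D (span φN ⊔ span ξ)
    rw [Submodule.disjoint_def]
    intro x hxD hx2
    rcases Submodule.mem_sup.1 hx2 with ⟨y, hy, z, hz, rfl⟩
    rcases Submodule.mem_span_singleton.1 hy with ⟨c, rfl⟩
    rcases Submodule.mem_span_singleton.1 hz with ⟨d, rfl⟩
    rcases hDdec _ hxD with ⟨s, a, b, hs, hdec⟩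
    obtain ⟨hsS, hsφE, hsφN, hsξ⟩ := (hD₀ s).1 hs
    have hsN : g s N = 0 := by rw [hgsymm]; exact hNS s hsS
    have hd0 : d = 0 := by
      have h1 : η (c • φ N + d • ξ) = d := by simp [hηφ, hηξ]
      have h2 : η (s + a • E + b • φ E) = 0 := by simp [hηD₀ s hs, hηE, hηφ]
      rw [hdec, h2] at h1
      exact h1.symm
    have hb0 : b = 0 := by
      have h1 : g (c • φ N + d • ξ) (φ N) = 0 := by
        simp [map_add, map_smul, hgφNφN, hgξφN]
      have h2 : g (s + a • E + b • φ E) (φ N) = b := by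
        simp only [map_add, map_smul, LinearMap.add_apply, LinearMap.smul_apply, smul_eq_mul,
          hsφN, hgEφN, hgφEφN]; ring
      rw [hdec, h2] at h1
      exact h1
    have ha0 : a = 0 := by
      have h1 : g (c • φ N + d • ξ) N = 0 := by
        have hφNN : g (φ N) N = 0 := by rw [hgsymm]; exact hNS _ hφNS
        have hξN : g ξ N = 0 := by rw [hgsymm]; exact hNS _ hξS
        simp [map_add, map_smul, hφNN, hξN]
      have h2 : g (s + a • E + b • φ E) N = a := by
        have hφEN : g (φ E) N = 0 := by rw [hgsymm]; exact hNS _ hφES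
        simp only [map_add, map_smul, LinearMap.add_apply, LinearMap.smul_apply, smul_eq_mul,
          hsN, hEN, hφEN]; ring
      rw [hdec, h2] at h1
      exact h1
    have hc0 : c = 0 := by
      have h1 : g (c • φ N + d • ξ) (φ E) = c := by
        simp only [map_add, map_smul, LinearMap.add_apply, LinearMap.smul_apply, smul_eq_mul,
          hgφNφE, hgξφE]; ring
      have h2 : g (s + a • E + b • φ E) (φ E) = 0 := by
        simp [map_add, map_smul, hsφE, hgEφE, hgφEφE, ha0, hb0]
      rw [hdec, h2] at h1
      simp [h1.symm]
    simp [hc0, hd0]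
  · -- Disjoint span φN, span ξ
    rw [Submodule.disjoint_def]
    intro x h1 h2
    rcases Submodule.mem_span_singleton.1 h1 with ⟨a, rfl⟩
    rcases Submodule.mem_span_singleton.1 h2 with ⟨b, hb⟩
    have hη1 : η (a • φ N) = 0 := by simp [hηφ]
    have hη2 : η (b • ξ) = b := by simp [hηξ]
    rw [hb, hη1] at hη2
    rw [← hb, ← hη2, zero_smul]
  · -- D ⊥ ξ
    intro d hd
    rcases hDdec d hd with ⟨s, a, b, hs, rfl⟩
    obtain ⟨-, -, -, hsξ⟩ := (hD₀ s).1 hs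
    simp [map_add, map_smul, hsξ, hgEξ, hgφEξ]
  · -- span φN ⊥ ξ
    intro d hd
    rcases Submodule.mem_span_singleton.1 hd with ⟨a, rfl⟩
    simp [map_smul, hgφNξ]
end

section
/- Let W ⊆ V be a hyperplane on which g restricts degenerately, let E be a nonzero vector spanning Rad W, and let S ⊆ W be a subspace with W = S ⊕ span{E} on which g restricts nondegenerately. Then there exists a unique vector N in the g-orthogonal complement S^⊥ of S in V such that g(N, N) = 0 and g(E, N) = 1; moreover N ∉ W and V = W ⊕ span{N}. -/
/-!
Since `S` is nondegenerate, `V = S ⊕ S^⊥`; as `E ≠ 0` is orthogonal to `S`, it pairs nontrivially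
with some `Z ∈ S^⊥`, and since `E` is isotropic the hyperbolic-pair correction
`N = Z - (g(Z, Z) / 2) E` (after scaling `g(E, Z)` to `1`) is isotropic with `g(E, N) = 1`.
The hyperplane `W` lies in, hence equals, the kernel of `g(E, ·)`, which `N` does not lie in;
this gives `V = W ⊕ span{N}`. Two such vectors differ by an element of `W ∩ W^⊥ = span{E}`,
and `g(N + aE, N + aE) = 2a` forces `a = 0`.
-/

open Module

namespace Module.Dual

variable {K V : Type*} [Field K] [AddCommGroup V] [Module K V] {f : Dual K V}

theorem isCompl_ker_span_singleton {x : V} (hx : f x ≠ 0) :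
    IsCompl (LinearMap.ker f) (K ∙ x) := by
  have hf : f ≠ 0 := fun h => hx (by simp [h])
  refine Submodule.isCompl_span_singleton_of_isCoatom_of_notMem ?_ hx
  exact LinearMap.isCoatom_ker_of_surjective 
    (LinearMap.range_eq_top.mp (range_eq_top_of_ne_zero hf))

theorem ker_eq_of_le_of_finrank_add_one [FiniteDimensional K V] (hf : f ≠ 0)
    {W : Submodule K V} (hW : W ≤ LinearMap.ker f) (hcodim : finrank K W + 1 = finrank K V) :
    LinearMap.ker f = W :=
  (Submodule.eq_of_le_of_finrank_eq hW (by have := finrank_ker_add_one_of_ne_zero hf; omega)).symm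

end Module.Dual

namespace LinearMap.BilinForm

variable {K V : Type*} [Field K] [AddCommGroup V] [Module K V] {B : LinearMap.BilinForm K V}

theorem exists_mem_apply_ne_zero_of_sup_eq_top (hB : B.SeparatingLeft) {S T : Submodule K V}
    (hST : S ⊔ T = ⊤) {x : V} (hx : x ≠ 0) (hxS : ∀ s ∈ S, B x s = 0) :
    ∃ z ∈ T, B x z ≠ 0 := by
  by_contra! hxT
  refine hx (hB x fun y => ?_)
  obtain ⟨s, hs, t, ht, rfl⟩ := Submodule.mem_sup.1 (hST ▸ Submodule.mem_top : y ∈ S ⊔ T)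
  rw [map_add, hxS s hs, hxT t ht, add_zero]

variable [NeZero (2 : K)]

theorem exists_isotropic_mem_apply_eq_one (hB : B.IsSymm) {P : Submodule K V} {e z : V}
    (he : e ∈ P) (hee : B e e = 0) (hz : z ∈ P) (hez : B e z ≠ 0) :
    ∃ n ∈ P, B n n = 0 ∧ B e n = 1 := by
  set z₁ := (B e z)⁻¹ • z
  have hez₁ : B e z₁ = 1 := by simp [z₁, inv_mul_cancel₀ hez]
  have hz₁e : B z₁ e = 1 := hB.eq e z₁ ▸ hez₁
  refine ⟨z₁ - (B z₁ z₁ / 2) • e, P.sub_mem (P.smul_mem _ hz) (P.smul_mem _ he), ?_, ?_⟩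
  · simp only [map_sub, map_smul, LinearMap.sub_apply, LinearMap.smul_apply, smul_eq_mul,
      hez₁, hz₁e, hee]
    field_simp
    ring
  · simp [hez₁, hee]

theorem eq_of_isotropic_of_sub_mem_span (hB : B.IsSymm) {e n n' : V} (hee : B e e = 0)
    (hnn : B n n = 0) (hn'n' : B n' n' = 0) (hen : B e n ≠ 0) (hsub : n' - n ∈ K ∙ e) :
    n' = n := by
  obtain ⟨a, ha⟩ := Submodule.mem_span_singleton.1 hsub
  have hn' : n' = n + a • e := by rw [ha]; abel
  have hexpand : B n' n' = 2 * a * B e n := by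
    simp only [hn', map_add, map_smul, LinearMap.add_apply, LinearMap.smul_apply, smul_eq_mul,
      hnn, hee, hB.eq n e]
    ring
  have ha0 : a = 0 := by simpa [hexpand, hen, two_ne_zero (α := K)] using hn'n'
  rw [hn', ha0, zero_smul, add_zero]

end LinearMap.BilinForm

open LinearMap.BilinForm in
theorem stmt_17_general (V : Type*) [AddCommGroup V] [Module ℝ V] [FiniteDimensional ℝ V]
    (g : V →ₗ[ℝ] V →ₗ[ℝ] ℝ)
    (hgsymm : ∀ X Y : V, g X Y = g Y X)
    (hgnd : ∀ X : V, (∀ Y : V, g X Y = 0) → X = 0)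
    (W : Submodule ℝ V)
    (hcodim : Module.finrank ℝ W + 1 = Module.finrank ℝ V)
    (Worth : Submodule ℝ V)
    (hWorth : ∀ v : V, v ∈ Worth ↔ ∀ w ∈ W, g v w = 0)
    (E : V) (hE0 : E ≠ 0)
    (hEspan : Submodule.span ℝ {E} = W ⊓ Worth)
    (S : Submodule ℝ V) (hSE : S ⊔ Submodule.span ℝ {E} = W)
    (hSnd : ∀ s ∈ S, (∀ t ∈ S, g s t = 0) → s = 0)
    (Sorth : Submodule ℝ V)
    (hSorth : ∀ v : V, v ∈ Sorth ↔ ∀ s ∈ S, g v s = 0) :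
    (∃! N : V, N ∈ Sorth ∧ g N N = 0 ∧ g E N = 1) ∧
    (∀ N : V, (N ∈ Sorth ∧ g N N = 0 ∧ g E N = 1) →
      N ∉ W ∧ Disjoint W (Submodule.span ℝ {N}) ∧
      W ⊔ Submodule.span ℝ {N} = ⊤) := by
  have hsymm : IsSymm g := ⟨hgsymm⟩
  have hEW : E ∈ W ⊓ Worth := hEspan ▸ Submodule.mem_span_singleton_self E
  have hEperp : W ≤ LinearMap.ker (g E) := fun w hw => (hWorth E).1 hEW.2 w hw
  have hSW : S ≤ W := hSE ▸ le_sup_left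
  have hESorth : E ∈ Sorth := (hSorth E).2 fun s hs => hEperp (hSW hs)
  have hker : LinearMap.ker (g E) = W :=
    Module.Dual.ker_eq_of_le_of_finrank_add_one (fun h => hE0 (hgnd E (by simp [h]))) hEperp
      hcodim
  have hSorth_eq : Sorth = orthogonal g S := by
    ext v; simp only [hSorth, mem_orthogonal_iff, hgsymm v]
  have hSST : S ⊔ Sorth = ⊤ := by
    refine (hSorth_eq ▸ (isCompl_orthogonal_iff_disjoint hsymm.isRefl).2 ?_).sup_eq_top
    exact Submodule.disjoint_def.2 fun s hs hs' =>
      hSnd s hs fun t ht => hgsymm s t ▸ (mem_orthogonal_iff.1 hs') t ht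
  obtain ⟨Z, hZ, hEZ⟩ := exists_mem_apply_ne_zero_of_sup_eq_top hgnd hSST hE0
    fun s hs => hEperp (hSW hs)
  have hEE : g E E = 0 := hEperp hEW.1
  obtain ⟨N, hN, hNN, hEN⟩ := exists_isotropic_mem_apply_eq_one hsymm hESorth hEE hZ hEZ
  have hcompl : ∀ N, g E N = 1 → IsCompl W (ℝ ∙ N) := fun N hEN =>
    hker ▸ Module.Dual.isCompl_ker_span_singleton (hEN ▸ one_ne_zero)
  refine ⟨⟨N, ⟨hN, hNN, hEN⟩, fun N' ⟨hN', hN'N', hEN'⟩ => ?_⟩, fun N ⟨_, _, hEN⟩ =>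
    ⟨fun hNW => by simpa [hEN] using hEperp hNW, (hcompl N hEN).disjoint,
      (hcompl N hEN).sup_eq_top⟩⟩
  refine eq_of_isotropic_of_sub_mem_span hsymm hEE hNN hN'N' (hEN ▸ one_ne_zero) ?_
  have hsubW : N' - N ∈ W := hker ▸ show g E (N' - N) = 0 by simp [hEN, hEN']
  have hsubperp : W ≤ LinearMap.ker (g (N' - N)) := by
    rw [← hSE]
    refine sup_le (fun s hs => ?_) (Submodule.span_singleton_le_iff_mem _ _ |>.2 ?_)
    · simp [LinearMap.mem_ker, (hSorth N').1 hN' s hs, (hSorth N).1 hN s hs]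
    · simp [LinearMap.mem_ker, hgsymm _ E, hEN, hEN']
  exact hEspan ▸ ⟨hsubW, (hWorth _).2 hsubperp⟩

theorem stmt_17 (V : Type*) [AddCommGroup V] [Module ℝ V] [FiniteDimensional ℝ V]
    (g : V →ₗ[ℝ] V →ₗ[ℝ] ℝ)
    (hgsymm : ∀ X Y : V, g X Y = g Y X)
    (hgnd : ∀ X : V, (∀ Y : V, g X Y = 0) → X = 0)
    (W : Submodule ℝ V)
    (hcodim : Module.finrank ℝ W + 1 = Module.finrank ℝ V)
    (Worth : Submodule ℝ V)
    (hWorth : ∀ v : V, v ∈ Worth ↔ ∀ w ∈ W, g v w = 0)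
    (hdeg : ∃ v ∈ W, v ≠ 0 ∧ ∀ w ∈ W, g v w = 0)
    (E : V) (hE0 : E ≠ 0)
    (hEspan : Submodule.span ℝ {E} = W ⊓ Worth)
    (S : Submodule ℝ V) (hSE : S ⊔ Submodule.span ℝ {E} = W)
    (hSEdisj : S ⊓ Submodule.span ℝ {E} = ⊥)
    (hSnd : ∀ s ∈ S, (∀ t ∈ S, g s t = 0) → s = 0)
    (Sorth : Submodule ℝ V)
    (hSorth : ∀ v : V, v ∈ Sorth ↔ ∀ s ∈ S, g v s = 0) :
    (∃! N : V, N ∈ Sorth ∧ g N N = 0 ∧ g E N = 1) ∧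
    (∀ N : V, (N ∈ Sorth ∧ g N N = 0 ∧ g E N = 1) →
      N ∉ W ∧ Disjoint W (Submodule.span ℝ {N}) ∧
      W ⊔ Submodule.span ℝ {N} = ⊤) :=
  stmt_17_general V g hgsymm hgnd W hcodim Worth hWorth E hE0 hEspan S hSE hSnd Sorth hSorth
end
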